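/- arXiv:2003.07522 — 2 statements merged into one kernel-verified Lean document; each statement's English description precedes it below -/
import Mathlib

section
/- Let A, A', B, B', C ∈ ℂ^{r×r} with C + nI invertible for all integers n ≥ 0, A, A', B pairwise commuting, B'C = CB', and |x| < 1, |y| < 1; let s be a non-negative integer. (i) If A + kI is invertible for all integers k ≥ 0, then F₃(A+sI, A', B, B'; C; x, y) = F₃(A, A', B, B'; C; x, y) + x·B·[∑_{k=1}^{s} F₃(A+kI, A', B+I, B'; C+I; x, y)]·C⁻¹. (ii) If A' + kI is invertible for all integers k ≥ 0, then F₃(A, A'+sI, B, B'; C; x, y) = F₃(A, A', B, B'; C; x, y) + y·[∑_{k=1}^{s} F₃(A, A'+kI, B, B'+I; C+I; x, y)]·B'·C⁻¹. (iii) If A − kI is invertible for all integers 1 ≤ k ≤ s, then F₃(A−sI, A', B, B'; C; x, y) = F₃(A, A', B, B'; C; x, y) − x·B·[∑_{k=0}^{s−1} F₃(A−kI, A', B+I, B'; C+I; x, y)]·C⁻¹. (iv) If A' − kI is invertible for all integers 1 ≤ k ≤ s, then F₃(A, A'−sI, B, B'; C; x, y) = F₃(A, A', B, B'; C; x, y)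 − y·[∑_{k=0}^{s−1} F₃(A, A'−kI, B, B'+I; C+I; x, y)]·B'·C⁻¹. -/
/-- The shifted factorial (Pochhammer) matrix: `(A)_0 = I`, `(A)_{n+1} = (A)_n (A + nI)`. -/
noncomputable def mPoch {r : ℕ} (A : Matrix (Fin r) (Fin r) ℂ) : ℕ → Matrix (Fin r) (Fin r) ℂ
  | 0 => 1
  | n + 1 => mPoch A n * (A + (n : ℂ) • 1)

/-- The third Appell matrix function `F₃(A, A', B, B'; C; x, y)`. -/
noncomputable def appellF3 {r : ℕ} (A A' B B' C : Matrix (Fin r) (Fin r) ℂ) (x y : ℂ) :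
    Matrix (Fin r) (Fin r) ℂ :=
  ∑' p : ℕ × ℕ,
    (((p.1.factorial : ℂ) * (p.2.factorial : ℂ))⁻¹ * x ^ p.1 * y ^ p.2) •
      (mPoch A p.1 * mPoch A' p.2 * mPoch B p.1 * mPoch B' p.2 * (mPoch C (p.1 + p.2))⁻¹)

/-!
Everything rests on the contiguous relation
`F₃(A+I, …) - F₃(A, …) = x B F₃(A+I, A', B+I, B'; C+I) C⁻¹` and its analogue in `A'`,
obtained by comparing the double series term by term:
`(A+I)_{m+1} - (A)_{m+1} = (m+1)(A+I)_m`, `(B)_{m+1} = B (B+I)_m` and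
`(C)_{m+n+1}⁻¹ = (C+I)_{m+n}⁻¹ C⁻¹`, with the `m = 0` terms cancelling. Telescoping the
relation along `A ± kI` gives the four formulas.

Comparing the series requires them to converge. From `(C + kI) (C + kI)⁻¹ = I` one gets
`‖(C + kI)⁻¹‖ ≤ 1 / (k - ‖C‖)`, so `‖(C)_N⁻¹‖ = O(μ^N / N!)` for every `μ > 1`; since
`(m+n)! ≥ m! n!`, the double series is then dominated by the product of two series
`∑ (a)_m (b)_m (μ t)^m / m!²`, which converge by the ratio test as soon as `μ t < 1`.
-/

open Finset Filter Topology

theorem tsum_sub_tsum_eq_tsum_comp {α β γ : Type*} [AddCommGroup γ] [TopologicalSpace γ]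
    [IsTopologicalAddGroup γ] [T2Space γ] {f g : α → γ} {e : β → α} (hf : Summable f)
    (hg : Summable g) (he : Function.Injective e) (hfg : ∀ a ∉ Set.range e, f a = g a) :
    ∑' a, f a - ∑' a, g a = ∑' b, (f (e b) - g (e b)) := by
  rw [← hf.tsum_sub hg]
  refine (he.tsum_eq (f := fun a => f a - g a) fun a ha => ?_).symm
  by_contra hae
  exact ha (sub_eq_zero.2 (hfg a hae))

theorem eq_add_sum_Icc_of_succ {α : Type*} [AddCommMonoid α] {F G : ℕ → α}
    (h : ∀ k, F (k + 1) = F k + G (k + 1)) (s : ℕ) : F s = F 0 + ∑ k ∈ Icc 1 s, G k := by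
  induction s with
  | zero => simp
  | succ s ih => rw [h, ih, sum_Icc_succ_top (by omega), add_assoc]

theorem eq_sub_sum_range_of_succ {α : Type*} [AddCommGroup α] {F G : ℕ → α}
    (h : ∀ k, F k = F (k + 1) + G k) (s : ℕ) : F s = F 0 - ∑ k ∈ range s, G k := by
  induction s with
  | zero => simp
  | succ s ih => rw [sum_range_succ, sub_add_eq_sub_sub, ← ih, h s, add_sub_cancel_right]

theorem exists_prod_range_le_mul_pow {f : ℕ → ℝ} {ρ : ℝ} (hf : ∀ k, 0 ≤ f k) (hρ : 0 < ρ)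
    (h : ∀ᶠ k in atTop, f k ≤ ρ) : ∃ D, ∀ N, ∏ k ∈ range N, f k ≤ D * ρ ^ N := by
  obtain ⟨K, hK⟩ := eventually_atTop.1 h
  set g : ℕ → ℝ := fun k => max (f k / ρ) 1
  have hg_one : ∀ k, K ≤ k → g k = 1 := fun k hk =>
    max_eq_right ((div_le_one hρ).2 (hK k hk))
  refine ⟨∏ k ∈ range K, g k, fun N => ?_⟩
  calc ∏ k ∈ range N, f k ≤ ∏ k ∈ range N, (ρ * g k) :=
        prod_le_prod (fun k _ => hf k) fun k _ =>
          (mul_div_cancel₀ (f k) hρ.ne').symm.le.trans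
            (mul_le_mul_of_nonneg_left (le_max_left _ _) hρ.le)
    _ = ρ ^ N * ∏ k ∈ range N, g k := by rw [prod_mul_distrib, prod_const, card_range]
    _ ≤ ρ ^ N * ∏ k ∈ range (max N K), g k := by
        gcongr
        · exact fun k _ _ => le_max_right _ _
        · exact le_max_left N K
    _ = (∏ k ∈ range K, g k) * ρ ^ N := by
        rw [mul_comm, prod_subset (range_mono (le_max_right N K)) fun k _ hk =>
          hg_one k (by simpa using hk)]

theorem summable_prod_range_of_tendsto {f : ℕ → ℝ} {t : ℝ} (hf : ∀ k, 0 ≤ f k)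
    (h : Tendsto f atTop (𝓝 t)) (ht : t < 1) : Summable fun N => ∏ k ∈ range N, f k := by
  obtain ⟨ρ, htρ, hρ⟩ := exists_between ht
  refine summable_of_ratio_norm_eventually_le hρ ((h.eventually_le_const htρ).mono fun k hk => ?_)
  rw [prod_range_succ, norm_mul, mul_comm, Real.norm_of_nonneg (hf k)]
  exact mul_le_mul_of_nonneg_right hk (norm_nonneg _)

theorem summable_pochhammer_mul_pochhammer_mul_pow_div_sq {a b t : ℝ} (ha : 0 ≤ a) (hb : 0 ≤ b)
    (ht₀ : 0 ≤ t) (ht : t < 1) :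
    Summable fun m : ℕ =>
      (∏ k ∈ range m, (a + k)) * (∏ k ∈ range m, (b + k)) * t ^ m / (m.factorial : ℝ) ^ 2 := by
  have hlim (c : ℝ) : Tendsto (fun k : ℕ => (c + k) / (k + 1)) atTop (𝓝 1) := by
    simpa [add_comm (1 : ℝ)] using tendsto_add_mul_div_add_mul_atTop_nhds c 1 1 one_ne_zero
  have key := summable_prod_range_of_tendsto
    (f := fun k : ℕ => (a + k) / (k + 1) * ((b + k) / (k + 1)) * t) (fun k => by positivity)
    (by simpa using ((hlim a).mul (hlim b)).mul_const t) ht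
  convert key using 2 with m
  have hfac : ∏ k ∈ range m, ((k : ℝ) + 1) = m.factorial := by
    exact_mod_cast prod_range_add_one_eq_factorial m
  rw [prod_mul_distrib, prod_mul_distrib, prod_div_distrib, prod_div_distrib, prod_const,
    card_range, hfac]
  ring

variable {r : ℕ}

local notation "M" => Matrix (Fin r) (Fin r) ℂ

theorem Commute.matrix_inv_right {X Y : M} (h : Commute X Y) (hY : IsUnit Y) :
    Commute X Y⁻¹ := by
  obtain ⟨u, rfl⟩ := hY
  rw [← Matrix.coe_units_inv]
  exact h.units_inv_right

theorem commute_mPoch {X A : M} (h : Commute X A) (n : ℕ) : Commute X (mPoch A n) := by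
  induction n with
  | zero => exact Commute.one_right X
  | succ n ih => exact ih.mul_right (h.add_right ((Commute.one_right X).smul_right _))

theorem mPoch_succ_eq_mul (A : M) (n : ℕ) : mPoch A (n + 1) = A * mPoch (A + 1) n := by
  induction n with
  | zero => simp [mPoch]
  | succ n ih =>
    rw [mPoch, ih, mPoch, mul_assoc]
    congr 2
    push_cast
    rw [add_smul, one_smul, add_assoc, add_comm (1 : M)]

theorem mPoch_succ_eq_mul' (A : M) (n : ℕ) : mPoch A (n + 1) = mPoch (A + 1) n * A :=
  (mPoch_succ_eq_mul A n).trans (commute_mPoch (Commute.add_right (.refl A) (.one_right A)) n).eq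

theorem mPoch_add_one_succ_sub (A : M) (n : ℕ) :
    mPoch (A + 1) (n + 1) - mPoch A (n + 1) = ((n : ℂ) + 1) • mPoch (A + 1) n := by
  have h : A + 1 + (n : ℂ) • 1 - A = ((n : ℂ) + 1) • (1 : M) := by
    rw [add_smul, one_smul]
    abel
  rw [mPoch, mPoch_succ_eq_mul', ← mul_sub, h, mul_smul_comm, mul_one]

theorem inv_mPoch_succ (C : M) (n : ℕ) :
    (mPoch C (n + 1))⁻¹ = (mPoch (C + 1) n)⁻¹ * C⁻¹ := by
  rw [mPoch_succ_eq_mul, Matrix.mul_inv_rev]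

theorem isUnit_mPoch {C : M} (hC : ∀ n : ℕ, IsUnit (C + (n : ℂ) • 1)) (n : ℕ) :
    IsUnit (mPoch C n) := by
  induction n with
  | zero => exact isUnit_one
  | succ n ih => exact ih.mul (hC n)

theorem isUnit_add_one_add_smul_one {C : M} (hC : ∀ n : ℕ, IsUnit (C + (n : ℂ) • 1)) (n : ℕ) :
    IsUnit (C + 1 + (n : ℂ) • 1) := by
  simpa [add_smul, add_assoc, add_comm (1 : M)] using hC (n + 1)

noncomputable def appellF3Term (A A' B B' C : M) (x y : ℂ) (p : ℕ × ℕ) : M :=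
  (((p.1.factorial : ℂ) * (p.2.factorial : ℂ))⁻¹ * x ^ p.1 * y ^ p.2) •
    (mPoch A p.1 * mPoch A' p.2 * mPoch B p.1 * mPoch B' p.2 * (mPoch C (p.1 + p.2))⁻¹)

theorem appellF3_eq_tsum (A A' B B' C : M) (x y : ℂ) :
    appellF3 A A' B B' C x y = ∑' p, appellF3Term A A' B B' C x y p := rfl

section LinftyOpNorm

-- Summability does not depend on the norm; the ℓ∞ operator norm is a submultiplicative one.
attribute [local instance] Matrix.linftyOpNormedAddCommGroup Matrix.linftyOpNormedRing
  Matrix.linftyOpNormedAlgebra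

theorem Matrix.linfty_opNorm_one_le {n α : Type*} [Fintype n] [DecidableEq n] [NormedRing α]
    [NormOneClass α] : ‖(1 : Matrix n n α)‖ ≤ 1 := by
  rw [← Matrix.diagonal_one, Matrix.linfty_opNorm_diagonal]
  exact (pi_norm_const_le (1 : α)).trans norm_one.le

theorem norm_mPoch_le (A : M) (n : ℕ) : ‖mPoch A n‖ ≤ ∏ k ∈ range n, (‖A‖ + k) := by
  induction n with
  | zero => exact Matrix.linfty_opNorm_one_le
  | succ n ih =>
    rw [mPoch, prod_range_succ]
    refine norm_mul_le_of_le ih ((norm_add_le _ _).trans ?_)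
    rw [norm_smul, Complex.norm_natCast]
    exact add_le_add_right
      (mul_le_of_le_one_right (Nat.cast_nonneg n) Matrix.linfty_opNorm_one_le) _

theorem norm_inv_mPoch_le (C : M) (n : ℕ) :
    ‖(mPoch C n)⁻¹‖ ≤ ∏ k ∈ range n, ‖(C + (k : ℂ) • 1)⁻¹‖ := by
  induction n with
  | zero => simpa [mPoch] using Matrix.linfty_opNorm_one_le
  | succ n ih =>
    rw [mPoch, Matrix.mul_inv_rev, prod_range_succ, mul_comm (∏ k ∈ range n, _)]
    exact norm_mul_le_of_le le_rfl ih

theorem sub_norm_mul_norm_inv_add_smul_one_le {C : M} {k : ℕ} (hC : IsUnit (C + (k : ℂ) • 1)) :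
    ((k : ℝ) - ‖C‖) * ‖(C + (k : ℂ) • 1)⁻¹‖ ≤ 1 := by
  set X := (C + (k : ℂ) • 1)⁻¹
  have hX : (k : ℂ) • X = 1 - C * X := by
    rw [eq_sub_iff_add_eq, ← smul_one_mul, ← add_mul, add_comm,
      Matrix.mul_nonsing_inv _ ((Matrix.isUnit_iff_isUnit_det _).1 hC)]
  have hnorm : (k : ℝ) * ‖X‖ ≤ 1 + ‖C‖ * ‖X‖ := by
    calc (k : ℝ) * ‖X‖ = ‖(k : ℂ) • X‖ := by rw [norm_smul, Complex.norm_natCast]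
      _ ≤ ‖(1 : M)‖ + ‖C * X‖ := hX ▸ norm_sub_le _ _
      _ ≤ 1 + ‖C‖ * ‖X‖ := add_le_add Matrix.linfty_opNorm_one_le (norm_mul_le _ _)
  linarith

theorem exists_norm_inv_mPoch_mul_factorial_le {C : M} (hC : ∀ n : ℕ, IsUnit (C + (n : ℂ) • 1))
    {μ : ℝ} (hμ : 1 < μ) : ∃ D, ∀ N, ‖(mPoch C N)⁻¹‖ * N.factorial ≤ D * μ ^ N := by
  have hev : ∀ᶠ k : ℕ in atTop, ‖(C + (k : ℂ) • 1)⁻¹‖ * (k + 1) ≤ μ := by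
    filter_upwards [eventually_ge_atTop ⌈(1 + μ * ‖C‖) / (μ - 1)⌉₊] with k hk
    have hk : 1 + μ * ‖C‖ ≤ (μ - 1) * k := by
      rw [← div_le_iff₀' (by linarith)]
      exact Nat.ceil_le.1 hk
    have := sub_norm_mul_norm_inv_add_smul_one_le (hC k)
    nlinarith [norm_nonneg (C + (k : ℂ) • 1)⁻¹]
  obtain ⟨D, hD⟩ := exists_prod_range_le_mul_pow (fun k => by positivity) (by linarith) hev
  refine ⟨D, fun N => le_trans ?_ (hD N)⟩
  have hfac : ∏ k ∈ range N, ((k : ℝ) + 1) = N.factorial := by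
    exact_mod_cast prod_range_add_one_eq_factorial N
  rw [prod_mul_distrib, hfac]
  exact mul_le_mul_of_nonneg_right (norm_inv_mPoch_le C N) (Nat.cast_nonneg _)

theorem summable_appellF3Term (A A' B B' : M) {C : M} (hC : ∀ n : ℕ, IsUnit (C + (n : ℂ) • 1))
    {x y : ℂ} (hx : ‖x‖ < 1) (hy : ‖y‖ < 1) : Summable (appellF3Term A A' B B' C x y) := by
  obtain ⟨μ, hμ, hμx, hμy⟩ : ∃ μ : ℝ, 1 < μ ∧ μ * ‖x‖ < 1 ∧ μ * ‖y‖ < 1 := by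
    obtain ⟨σ, hσ, hσ1⟩ := exists_between (max_lt hx hy)
    have hσ0 : 0 < σ := (norm_nonneg x).trans_lt ((le_max_left _ _).trans_lt hσ)
    refine ⟨σ⁻¹, one_lt_inv_iff₀.2 ⟨hσ0, hσ1⟩, ?_, ?_⟩ <;> rw [inv_mul_lt_iff₀ hσ0, mul_one]
    exacts [(le_max_left _ _).trans_lt hσ, (le_max_right _ _).trans_lt hσ]
  obtain ⟨D, hD⟩ := exists_norm_inv_mPoch_mul_factorial_le hC hμ
  have hsum := ((summable_pochhammer_mul_pochhammer_mul_pow_div_sq (norm_nonneg A) (norm_nonneg B)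
    (by positivity) hμx).mul_of_nonneg
    (summable_pochhammer_mul_pochhammer_mul_pow_div_sq (norm_nonneg A') (norm_nonneg B')
    (by positivity) hμy) (fun m => by positivity) (fun n => by positivity)).mul_left D
  refine hsum.of_norm_bounded fun ⟨m, n⟩ => ?_
  have hinv : ‖(mPoch C (m + n))⁻¹‖ ≤ D * μ ^ (m + n) / (m.factorial * n.factorial) := by
    rw [le_div_iff₀ (by positivity)]
    refine le_trans (mul_le_mul_of_nonneg_left ?_ (norm_nonneg _)) (hD (m + n))
    exact_mod_cast Nat.le_of_dvd (Nat.factorial_pos _)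
      (Nat.factorial_mul_factorial_dvd_factorial_add m n)
  have hmat := norm_mul_le_of_le (norm_mul_le_of_le (norm_mul_le_of_le (norm_mul_le_of_le
    (norm_mPoch_le A m) (norm_mPoch_le A' n)) (norm_mPoch_le B m)) (norm_mPoch_le B' n)) hinv
  rw [appellF3Term, norm_smul]
  refine (mul_le_mul_of_nonneg_left hmat (norm_nonneg _)).trans_eq ?_
  simp only [norm_mul, norm_inv, norm_pow, Complex.norm_natCast]
  ring

end LinftyOpNorm

theorem natCast_smul_one_add_one {R : Type*} [Ring R] [Module ℂ R] (A : R) (k : ℕ) :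
    A + (k : ℂ) • 1 + 1 = A + ((k + 1 : ℕ) : ℂ) • 1 := by
  push_cast
  rw [add_smul, one_smul, add_assoc]

theorem sub_natCast_succ_smul_one_add_one {R : Type*} [Ring R] [Module ℂ R] (A : R) (k : ℕ) :
    A - ((k + 1 : ℕ) : ℂ) • 1 + 1 = A - (k : ℂ) • 1 := by
  push_cast
  rw [add_smul, one_smul]
  abel

theorem factorial_coeff_succ_fst (x y : ℂ) (m n : ℕ) :
    (((m + 1).factorial : ℂ) * n.factorial)⁻¹ * x ^ (m + 1) * y ^ n * ((m : ℂ) + 1) =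
      x * (((m.factorial : ℂ) * n.factorial)⁻¹ * x ^ m * y ^ n) := by
  push_cast [Nat.factorial_succ]
  field_simp
  ring

theorem factorial_coeff_succ_snd (x y : ℂ) (m n : ℕ) :
    ((m.factorial : ℂ) * (n + 1).factorial)⁻¹ * x ^ m * y ^ (n + 1) * ((n : ℂ) + 1) =
      y * (((m.factorial : ℂ) * n.factorial)⁻¹ * x ^ m * y ^ n) := by
  push_cast [Nat.factorial_succ]
  field_simp
  ring

section Contiguous

variable {A A' B B' C : Matrix (Fin r) (Fin r) ℂ} {x y : ℂ}

theorem appellF3Term_add_one_fst_zero (n : ℕ) :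
    appellF3Term (A + 1) A' B B' C x y (0, n) = appellF3Term A A' B B' C x y (0, n) := by
  simp [appellF3Term, mPoch]

theorem appellF3Term_add_one_snd_zero (m : ℕ) :
    appellF3Term A (A' + 1) B B' C x y (m, 0) = appellF3Term A A' B B' C x y (m, 0) := by
  simp [appellF3Term, mPoch]

theorem appellF3Term_add_one_fst_succ (hAB : Commute A B) (hA'B : Commute A' B) (m n : ℕ) :
    appellF3Term (A + 1) A' B B' C x y (m + 1, n) - appellF3Term A A' B B' C x y (m + 1, n) =
      x • (B * appellF3Term (A + 1) A' (B + 1) B' (C + 1) x y (m, n) * C⁻¹) := by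
  have hB : Commute (mPoch (A + 1) m * mPoch A' n) B :=
    ((commute_mPoch (hAB.symm.add_right (.one_right B)) m).mul_right
      (commute_mPoch hA'B.symm n)).symm
  simp only [appellF3Term, ← smul_sub, ← sub_mul]
  rw [mPoch_add_one_succ_sub, mPoch_succ_eq_mul B, add_right_comm m 1 n, inv_mPoch_succ]
  simp only [smul_mul_assoc, mul_smul_comm, smul_smul]
  rw [factorial_coeff_succ_fst]
  congr 1
  simp only [← mul_assoc, hB.eq]

theorem appellF3Term_add_one_snd_succ (hC : ∀ n : ℕ, IsUnit (C + (n : ℂ) • 1))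
    (hB'C : Commute B' C) (m n : ℕ) :
    appellF3Term A (A' + 1) B B' C x y (m, n + 1) - appellF3Term A A' B B' C x y (m, n + 1) =
      y • (appellF3Term A (A' + 1) B (B' + 1) (C + 1) x y (m, n) * B' * C⁻¹) := by
  have hB' : Commute B' (mPoch (C + 1) (m + n))⁻¹ :=
    Commute.matrix_inv_right (commute_mPoch (hB'C.add_right (.one_right B')) _)
      (isUnit_mPoch (isUnit_add_one_add_smul_one hC) _)
  simp only [appellF3Term, ← smul_sub, ← sub_mul, ← mul_sub]
  rw [mPoch_add_one_succ_sub, mPoch_succ_eq_mul' B', ← Nat.add_assoc, inv_mPoch_succ]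
  simp only [smul_mul_assoc, mul_smul_comm, smul_smul]
  rw [factorial_coeff_succ_snd]
  simp only [mul_assoc]
  rw [hB'.left_comm]

theorem appellF3_add_one_fst (hAB : Commute A B) (hA'B : Commute A' B)
    (hC : ∀ n : ℕ, IsUnit (C + (n : ℂ) • 1)) (hx : ‖x‖ < 1) (hy : ‖y‖ < 1) :
    appellF3 (A + 1) A' B B' C x y =
      appellF3 A A' B B' C x y + x • (B * appellF3 (A + 1) A' (B + 1) B' (C + 1) x y * C⁻¹) := by
  have hsum := summable_appellF3Term (A + 1) A' (B + 1) B'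
    (isUnit_add_one_add_smul_one hC) hx hy
  rw [← sub_eq_iff_eq_add', appellF3_eq_tsum, appellF3_eq_tsum, appellF3_eq_tsum,
    tsum_sub_tsum_eq_tsum_comp (summable_appellF3Term _ _ _ _ hC hx hy)
      (summable_appellF3Term _ _ _ _ hC hx hy) (e := fun p : ℕ × ℕ => (p.1 + 1, p.2))
      (fun p q h => by simpa [Prod.ext_iff] using h)]
  · simp only [appellF3Term_add_one_fst_succ hAB hA'B, ← hsum.tsum_mul_left B,
      ← (hsum.mul_left B).tsum_mul_right C⁻¹, ((hsum.mul_left B).mul_right C⁻¹).tsum_const_smul]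
  · rintro ⟨_ | m, n⟩ hmn
    · exact appellF3Term_add_one_fst_zero n
    · exact absurd ⟨(m, n), rfl⟩ hmn

theorem appellF3_add_one_snd (hB'C : Commute B' C)
    (hC : ∀ n : ℕ, IsUnit (C + (n : ℂ) • 1)) (hx : ‖x‖ < 1) (hy : ‖y‖ < 1) :
    appellF3 A (A' + 1) B B' C x y =
      appellF3 A A' B B' C x y + y • (appellF3 A (A' + 1) B (B' + 1) (C + 1) x y * B' * C⁻¹) := by
  have hsum := summable_appellF3Term A (A' + 1) B (B' + 1)
    (isUnit_add_one_add_smul_one hC) hx hy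
  rw [← sub_eq_iff_eq_add', appellF3_eq_tsum, appellF3_eq_tsum, appellF3_eq_tsum,
    tsum_sub_tsum_eq_tsum_comp (summable_appellF3Term _ _ _ _ hC hx hy)
      (summable_appellF3Term _ _ _ _ hC hx hy) (e := fun p : ℕ × ℕ => (p.1, p.2 + 1))
      (fun p q h => by simpa [Prod.ext_iff] using h)]
  · simp only [appellF3Term_add_one_snd_succ hC hB'C, ← hsum.tsum_mul_right B',
      ← (hsum.mul_right B').tsum_mul_right C⁻¹, ((hsum.mul_right B').mul_right C⁻¹).tsum_const_smul]
  · rintro ⟨m, _ | n⟩ hmn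
    · exact appellF3Term_add_one_snd_zero m
    · exact absurd ⟨(m, n), rfl⟩ hmn

theorem appellF3_add_natCast_fst (hAB : Commute A B) (hA'B : Commute A' B)
    (hC : ∀ n : ℕ, IsUnit (C + (n : ℂ) • 1)) (hx : ‖x‖ < 1) (hy : ‖y‖ < 1) (s : ℕ) :
    appellF3 (A + (s : ℂ) • 1) A' B B' C x y = appellF3 A A' B B' C x y +
      x • (B * (∑ k ∈ Icc 1 s, appellF3 (A + (k : ℂ) • 1) A' (B + 1) B' (C + 1) x y) * C⁻¹) := by
  have step (k : ℕ) := (natCast_smul_one_add_one A k) ▸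
    appellF3_add_one_fst (B' := B') (hAB.add_left ((Commute.one_left B).smul_left (k : ℂ))) hA'B
      hC hx hy
  rw [mul_sum, sum_mul, smul_sum]
  simpa using eq_add_sum_Icc_of_succ (F := fun k : ℕ => appellF3 (A + (k : ℂ) • 1) A' B B' C x y)
    (G := fun k : ℕ => x • (B * appellF3 (A + (k : ℂ) • 1) A' (B + 1) B' (C + 1) x y * C⁻¹)) step s

theorem appellF3_add_natCast_snd (hB'C : Commute B' C)
    (hC : ∀ n : ℕ, IsUnit (C + (n : ℂ) • 1)) (hx : ‖x‖ < 1) (hy : ‖y‖ < 1) (s : ℕ) :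
    appellF3 A (A' + (s : ℂ) • 1) B B' C x y = appellF3 A A' B B' C x y +
      y • ((∑ k ∈ Icc 1 s, appellF3 A (A' + (k : ℂ) • 1) B (B' + 1) (C + 1) x y) * B' * C⁻¹) := by
  have step (k : ℕ) := (natCast_smul_one_add_one A' k) ▸
    appellF3_add_one_snd (A := A) (B := B) (A' := A' + (k : ℂ) • 1) hB'C hC hx hy
  rw [sum_mul, sum_mul, smul_sum]
  simpa using eq_add_sum_Icc_of_succ (F := fun k : ℕ => appellF3 A (A' + (k : ℂ) • 1) B B' C x y)
    (G := fun k : ℕ => y • (appellF3 A (A' + (k : ℂ) • 1) B (B' + 1) (C + 1) x y * B' * C⁻¹)) step s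

theorem appellF3_sub_natCast_fst (hAB : Commute A B) (hA'B : Commute A' B)
    (hC : ∀ n : ℕ, IsUnit (C + (n : ℂ) • 1)) (hx : ‖x‖ < 1) (hy : ‖y‖ < 1) (s : ℕ) :
    appellF3 (A - (s : ℂ) • 1) A' B B' C x y = appellF3 A A' B B' C x y -
      x • (B * (∑ k ∈ range s, appellF3 (A - (k : ℂ) • 1) A' (B + 1) B' (C + 1) x y) * C⁻¹) := by
  have step (k : ℕ) := (sub_natCast_succ_smul_one_add_one A k) ▸
    appellF3_add_one_fst (B' := B')
      (hAB.sub_left ((Commute.one_left B).smul_left ((k + 1 : ℕ) : ℂ))) hA'B hC hx hy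
  rw [mul_sum, sum_mul, smul_sum]
  simpa using eq_sub_sum_range_of_succ (F := fun k : ℕ => appellF3 (A - (k : ℂ) • 1) A' B B' C x y)
    (G := fun k : ℕ => x • (B * appellF3 (A - (k : ℂ) • 1) A' (B + 1) B' (C + 1) x y * C⁻¹)) step s

theorem appellF3_sub_natCast_snd (hB'C : Commute B' C)
    (hC : ∀ n : ℕ, IsUnit (C + (n : ℂ) • 1)) (hx : ‖x‖ < 1) (hy : ‖y‖ < 1) (s : ℕ) :
    appellF3 A (A' - (s : ℂ) • 1) B B' C x y = appellF3 A A' B B' C x y -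
      y • ((∑ k ∈ range s, appellF3 A (A' - (k : ℂ) • 1) B (B' + 1) (C + 1) x y) * B' * C⁻¹) := by
  have step (k : ℕ) := (sub_natCast_succ_smul_one_add_one A' k) ▸
    appellF3_add_one_snd (A := A) (B := B) (A' := A' - ((k + 1 : ℕ) : ℂ) • 1) hB'C hC hx hy
  rw [sum_mul, sum_mul, smul_sum]
  simpa using eq_sub_sum_range_of_succ (F := fun k : ℕ => appellF3 A (A' - (k : ℂ) • 1) B B' C x y)
    (G := fun k : ℕ => y • (appellF3 A (A' - (k : ℂ) • 1) B (B' + 1) (C + 1) x y * B' * C⁻¹)) step s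

end Contiguous

theorem appellF3_recursion_A_general {r : ℕ} (A A' B B' C : Matrix (Fin r) (Fin r) ℂ) (x y : ℂ) (s : ℕ)
    (hC : ∀ n : ℕ, IsUnit (C + (n : ℂ) • (1 : Matrix (Fin r) (Fin r) ℂ)))
    (hAB : A * B = B * A) (hA'B : A' * B = B * A')
    (hB'C : B' * C = C * B')
    (hx : ‖x‖ < 1) (hy : ‖y‖ < 1) :
    ((∀ k : ℕ, IsUnit (A + (k : ℂ) • (1 : Matrix (Fin r) (Fin r) ℂ))) →
      appellF3 (A + (s : ℂ) • 1) A' B B' C x y =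
        appellF3 A A' B B' C x y +
          x • (B * (∑ k ∈ Finset.Icc 1 s,
            appellF3 (A + (k : ℂ) • 1) A' (B + 1) B' (C + 1) x y) * C⁻¹)) ∧
    ((∀ k : ℕ, IsUnit (A' + (k : ℂ) • (1 : Matrix (Fin r) (Fin r) ℂ))) →
      appellF3 A (A' + (s : ℂ) • 1) B B' C x y =
        appellF3 A A' B B' C x y +
          y • ((∑ k ∈ Finset.Icc 1 s,
            appellF3 A (A' + (k : ℂ) • 1) B (B' + 1) (C + 1) x y) * B' * C⁻¹)) ∧
    ((∀ k : ℕ, 1 ≤ k → k ≤ s → IsUnit (A - (k : ℂ) • (1 : Matrix (Fin r) (Fin r) ℂ))) →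
      appellF3 (A - (s : ℂ) • 1) A' B B' C x y =
        appellF3 A A' B B' C x y -
          x • (B * (∑ k ∈ Finset.range s,
            appellF3 (A - (k : ℂ) • 1) A' (B + 1) B' (C + 1) x y) * C⁻¹)) ∧
    ((∀ k : ℕ, 1 ≤ k → k ≤ s → IsUnit (A' - (k : ℂ) • (1 : Matrix (Fin r) (Fin r) ℂ))) →
      appellF3 A (A' - (s : ℂ) • 1) B B' C x y =
        appellF3 A A' B B' C x y -
          y • ((∑ k ∈ Finset.range s,
            appellF3 A (A' - (k : ℂ) • 1) B (B' + 1) (C + 1) x y) * B' * C⁻¹)) :=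
  ⟨fun _ => appellF3_add_natCast_fst hAB hA'B hC hx hy s,
    fun _ => appellF3_add_natCast_snd hB'C hC hx hy s,
    fun _ => appellF3_sub_natCast_fst hAB hA'B hC hx hy s,
    fun _ => appellF3_sub_natCast_snd hB'C hC hx hy s⟩

theorem appellF3_recursion_A {r : ℕ} (A A' B B' C : Matrix (Fin r) (Fin r) ℂ) (x y : ℂ) (s : ℕ)
    (hC : ∀ n : ℕ, IsUnit (C + (n : ℂ) • (1 : Matrix (Fin r) (Fin r) ℂ)))
    (hAA' : A * A' = A' * A) (hAB : A * B = B * A) (hA'B : A' * B = B * A')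
    (hB'C : B' * C = C * B')
    (hx : ‖x‖ < 1) (hy : ‖y‖ < 1) :
    ((∀ k : ℕ, IsUnit (A + (k : ℂ) • (1 : Matrix (Fin r) (Fin r) ℂ))) →
      appellF3 (A + (s : ℂ) • 1) A' B B' C x y =
        appellF3 A A' B B' C x y +
          x • (B * (∑ k ∈ Finset.Icc 1 s,
            appellF3 (A + (k : ℂ) • 1) A' (B + 1) B' (C + 1) x y) * C⁻¹)) ∧
    ((∀ k : ℕ, IsUnit (A' + (k : ℂ) • (1 : Matrix (Fin r) (Fin r) ℂ))) →
      appellF3 A (A' + (s : ℂ) • 1) B B' C x y =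
        appellF3 A A' B B' C x y +
          y • ((∑ k ∈ Finset.Icc 1 s,
            appellF3 A (A' + (k : ℂ) • 1) B (B' + 1) (C + 1) x y) * B' * C⁻¹)) ∧
    ((∀ k : ℕ, 1 ≤ k → k ≤ s → IsUnit (A - (k : ℂ) • (1 : Matrix (Fin r) (Fin r) ℂ))) →
      appellF3 (A - (s : ℂ) • 1) A' B B' C x y =
        appellF3 A A' B B' C x y -
          x • (B * (∑ k ∈ Finset.range s,
            appellF3 (A - (k : ℂ) • 1) A' (B + 1) B' (C + 1) x y) * C⁻¹)) ∧
    ((∀ k : ℕ, 1 ≤ k → k ≤ s → IsUnit (A' - (k : ℂ) • (1 : Matrix (Fin r) (Fin r) ℂ))) →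
      appellF3 A (A' - (s : ℂ) • 1) B B' C x y =
        appellF3 A A' B B' C x y -
          y • ((∑ k ∈ Finset.range s,
            appellF3 A (A' - (k : ℂ) • 1) B (B' + 1) (C + 1) x y) * B' * C⁻¹)) :=
  appellF3_recursion_A_general A A' B B' C x y s hC hAB hA'B hB'C hx hy
end

section
/- Let A, B, C, C' ∈ ℂ^{r×r} with C + nI and C' + nI invertible for all integers n ≥ 0, AB = BA, CC' = C'C, and √|x| + √|y| < 1. (i) If A + kI is invertible for all integers k ≥ 0, then for every non-negative integer s: F₄(A+sI, B; C, C'; x, y) = ∑_{k₁+k₂ ≤ s} (s!/(k₁! k₂! (s−k₁−k₂)!)) (B)_{k₁+k₂} x^{k₁} y^{k₂} ·[F₄(A+(k₁+k₂)I, B+(k₁+k₂)I; C+k₁I, C'+k₂I; x, y)]·(C)_{k₁}⁻¹·(C')_{k₂}⁻¹. (ii) If moreover A − kI is invertible for all integers 1 ≤ k ≤ s, then F₄(A−sI, B; C, C'; x, y) = ∑_{k₁+k₂ ≤ s} (s!/(k₁! k₂! (s−k₁−k₂)!)) (B)_{k₁+k₂} (−x)^{k₁} (−y)^{k₂} ·[F₄(A,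 B+(k₁+k₂)I; C+k₁I, C'+k₂I; x, y)]·(C)_{k₁}⁻¹·(C')_{k₂}⁻¹. -/
/-- The fourth Appell matrix function `F₄(A, B; C, C'; x, y)`. -/
noncomputable def appellF4 {r : ℕ} (A B C C' : Matrix (Fin r) (Fin r) ℂ) (x y : ℂ) :
    Matrix (Fin r) (Fin r) ℂ :=
  ∑' p : ℕ × ℕ,
    (((p.1.factorial : ℂ) * (p.2.factorial : ℂ))⁻¹ * x ^ p.1 * y ^ p.2) •
      (mPoch A (p.1 + p.2) * mPoch B (p.1 + p.2) * (mPoch C p.1)⁻¹ * (mPoch C' p.2)⁻¹)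

/-!
With `s^{(k)} = s (s - 1) ⋯ (s - k + 1)`, the matrix Pochhammer symbols obey the Vandermonde-type
expansions `(A + s)_P = ∑ₖ C(P, k) s^{(k)} (A + k)_{P-k}` and
`(A - s)_P = ∑ₖ (-1)ᵏ C(P, k) s^{(k)} (A)_{P-k}`, both by induction on `s` from the contiguous
relation `(X + 1)_n = (X)_n + n (X + 1)_{n-1}`. Inserting one of them into the `(M, N)` term of
`F₄(A ± s, …)` and splitting `C(M + N, k) = ∑_{k₁+k₂=k} C(M, k₁) C(N, k₂)` breaks the double series
into finitely many series indexed by `k₁ + k₂ ≤ s`. After the shift `(M, N) = (m + k₁, n + k₂)`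
the `(k₁, k₂)` series is the multinomial coefficient times
`(B)_{k₁+k₂} F₄(…; C + k₁, C' + k₂) (C)_{k₁}⁻¹ (C')_{k₂}⁻¹`, because `(B)_{k+j} = (B)_k (B + k)_j`,
`(C)_{k₁+m}⁻¹ = (C + k₁)_m⁻¹ (C)_{k₁}⁻¹`, and the commutation hypotheses let the factors be
regrouped.

Every series involved converges absolutely: for each `ρ > 1`, `‖(A)_n‖ = O(n! ρⁿ)` and
`‖(C)_n⁻¹‖ = O(ρⁿ / n!)`, so the `(m, n)` term is `O(C(m + n, m)² (ρ³‖x‖)^m (ρ³‖y‖)^n)`, which is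
`O(q^{m+n})` with `q = ρ³ (√‖x‖ + √‖y‖)² < 1` once `ρ` is close enough to `1`.
-/

open Finset
open scoped Nat

variable {r : ℕ}

local notation "Mat" => Matrix (Fin r) (Fin r) ℂ

lemma add_smul_one_add_smul_one (A : Mat) (k m : ℕ) :
    A + (k : ℂ) • 1 + (m : ℂ) • 1 = A + ((k + m : ℕ) : ℂ) • 1 := by
  rw [Nat.cast_add, add_smul, add_assoc]

lemma mPoch_add (A : Mat) (k m : ℕ) :
    mPoch A (k + m) = mPoch A k * mPoch (A + (k : ℂ) • 1) m := by
  induction m with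
  | zero => simp [mPoch]
  | succ m ih => rw [← add_assoc, mPoch, ih, mPoch, mul_assoc, add_smul_one_add_smul_one]

lemma mPoch_inv_add (C : Mat) (k m : ℕ) :
    (mPoch C (k + m))⁻¹ = (mPoch (C + (k : ℂ) • 1) m)⁻¹ * (mPoch C k)⁻¹ := by
  rw [mPoch_add, Matrix.mul_inv_rev]

lemma Commute.add_smul_one_right {R A : Type*} [CommSemiring R] [Semiring A] [Algebra R A]
    {X Y : A} (h : Commute X Y) (c : R) : Commute X (Y + c • 1) :=
  h.add_right ((Commute.one_right X).smul_right c)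

lemma Commute.mPoch_right {X Y : Mat} (h : Commute X Y) (n : ℕ) : Commute X (mPoch Y n) := by
  induction n with
  | zero => exact Commute.one_right X
  | succ n ih => exact ih.mul_right (h.add_smul_one_right _)

lemma Commute.mPoch_mPoch {X Y : Mat} (h : Commute X Y) (a b : ℕ) :
    Commute (mPoch X a) (mPoch Y b) :=
  ((h.symm.mPoch_right a).symm).mPoch_right b

lemma Commute.inv_mPoch_inv_mPoch {X Y : Mat} (h : Commute X Y) (a b : ℕ) :
    Commute (mPoch X a)⁻¹ (mPoch Y b)⁻¹ := by
  simpa only [Matrix.nonsing_inv_eq_ringInverse] using (h.mPoch_mPoch a b).ringInverse_ringInverse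

lemma mPoch_succ_eq_mul_mPoch_add_one (X : Mat) (n : ℕ) :
    mPoch X (n + 1) = X * mPoch (X + 1) n := by
  rw [add_comm, mPoch_add]
  simp [mPoch]

/-- The truncated `n - 1` is harmless at `n = 0`, where the second term carries the factor `0`. -/
lemma mPoch_add_one (X : Mat) (n : ℕ) :
    mPoch (X + 1) n = mPoch X n + (n : ℂ) • mPoch (X + 1) (n - 1) := by
  cases n with
  | zero => simp [mPoch]
  | succ n =>
    have hX : Commute (mPoch (X + 1) n) X :=
      (((Commute.refl X).add_right (Commute.one_right X)).mPoch_right n).symm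
    rw [mPoch_succ_eq_mul_mPoch_add_one X n, Nat.add_sub_cancel, ← hX.eq, mPoch]
    push_cast
    rw [mul_add, mul_add, mul_one, mul_smul_comm, mul_one, add_smul, one_smul]
    abel

lemma mPoch_sub_one (X : Mat) (n : ℕ) :
    mPoch (X - 1) n = mPoch X n - (n : ℂ) • mPoch X (n - 1) := by
  have h := mPoch_add_one (X - 1) n
  rw [sub_add_cancel] at h
  rw [h, add_sub_cancel_right]

lemma choose_mul_descFactorial_succ_succ (P s k : ℕ) :
    P.choose (k + 1) * (s + 1).descFactorial (k + 1) =
      P.choose (k + 1) * s.descFactorial (k + 1) + P.choose k * s.descFactorial k * (P - k) := by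
  rw [Nat.succ_descFactorial_succ, Nat.descFactorial_succ, mul_right_comm (P.choose k),
    ← Nat.choose_succ_right_eq]
  rcases le_or_gt k s with h | h
  · obtain ⟨t, rfl⟩ := Nat.exists_eq_add_of_le h
    rw [Nat.add_sub_cancel_left]
    ring
  · simp [Nat.descFactorial_of_lt h]

lemma sum_choose_mul_descFactorial_succ {M : Type*} [AddCommMonoid M] (s P : ℕ) (T : ℕ → M) :
    ∑ k ∈ range (P + 1), (P.choose k * s.descFactorial k) • (T k + (P - k) • T (k + 1)) =
      ∑ k ∈ range (P + 1), (P.choose k * (s + 1).descFactorial k) • T k := by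
  simp only [smul_add, smul_smul, sum_add_distrib]
  rw [sum_range_succ (fun k => (P.choose k * s.descFactorial k * (P - k)) • T (k + 1)),
    sum_range_succ' (fun k => (P.choose k * s.descFactorial k) • T k),
    sum_range_succ' (fun k => (P.choose k * (s + 1).descFactorial k) • T k)]
  simp only [Nat.sub_self, mul_zero, zero_smul, add_zero, Nat.descFactorial_zero,
    choose_mul_descFactorial_succ_succ, add_smul, sum_add_distrib]
  abel

lemma mPoch_add_smul_one_eq_sum (s : ℕ) (A : Mat) (P : ℕ) :
    mPoch (A + (s : ℂ) • 1) P =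
      ∑ k ∈ range (P + 1), (P.choose k * s.descFactorial k) • mPoch (A + (k : ℂ) • 1) (P - k) := by
  induction s generalizing A with
  | zero =>
    rw [sum_eq_single 0 (fun k _ hk => by simp [Nat.descFactorial_of_lt (Nat.pos_of_ne_zero hk)])
      (by simp)]
    simp
  | succ s ih =>
    rw [← sum_choose_mul_descFactorial_succ, Nat.cast_succ, add_smul, one_smul, ← add_assoc,
      add_right_comm, ih]
    refine sum_congr rfl fun k _ => ?_
    have hk : A + (k : ℂ) • 1 + 1 = A + ((k + 1 : ℕ) : ℂ) • 1 := by
      rw [Nat.cast_succ, add_smul, one_smul, add_assoc]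
    rw [add_right_comm, mPoch_add_one, hk, Nat.sub_sub, Nat.cast_smul_eq_nsmul ℂ (P - k)]

lemma mPoch_sub_smul_one_eq_sum (s : ℕ) (A : Mat) (P : ℕ) :
    mPoch (A - (s : ℂ) • 1) P =
      ∑ k ∈ range (P + 1), (P.choose k * s.descFactorial k) • ((-1 : ℂ) ^ k • mPoch A (P - k)) := by
  induction s generalizing A with
  | zero =>
    rw [sum_eq_single 0 (fun k _ hk => by simp [Nat.descFactorial_of_lt (Nat.pos_of_ne_zero hk)])
      (by simp)]
    simp
  | succ s ih =>
    rw [← sum_choose_mul_descFactorial_succ, Nat.cast_succ, add_smul, one_smul, ← sub_sub,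
      sub_right_comm, ih]
    refine sum_congr rfl fun k _ => ?_
    rw [mPoch_sub_one, Nat.sub_sub, ← Nat.cast_smul_eq_nsmul ℂ (P - k), pow_succ]
    congr 1
    module

lemma sum_range_sum_range_sub {M : Type*} [AddCommMonoid M] (f : ℕ → ℕ → M) (n : ℕ) :
    ∑ i ∈ range n, ∑ j ∈ range (n - i), f i j =
      ∑ k ∈ range n, ∑ ij ∈ antidiagonal k, f ij.1 ij.2 := by
  induction n with
  | zero => simp
  | succ n ih =>
    have hsplit : ∀ i ∈ range (n + 1),
        ∑ j ∈ range (n + 1 - i), f i j = ∑ j ∈ range (n - i), f i j + f i (n - i) := by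
      intro i hi
      rw [Nat.sub_add_comm (Nat.lt_succ_iff.1 (mem_range.1 hi)), sum_range_succ]
    rw [sum_congr rfl hsplit, sum_add_distrib, sum_range_succ (fun i => ∑ j ∈ range (n - i), f i j),
      Nat.sub_self, sum_range_zero, add_zero, ih,
      sum_range_succ (fun k => ∑ ij ∈ antidiagonal k, f ij.1 ij.2),
      Nat.sum_antidiagonal_eq_sum_range_succ f, sum_range_succ (fun i => f i (n - i))]

/-- Vandermonde's identity; the ranges match because `s^{(k)} = 0` for `k > s` and
`C(m + n, k) = 0` for `k > m + n`. -/
lemma sum_choose_mul_choose_mul_descFactorial {M : Type*} [AddCommMonoid M] (s m n : ℕ)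
    (X : ℕ → M) :
    ∑ k₁ ∈ range (s + 1), ∑ k₂ ∈ range (s + 1 - k₁),
        (m.choose k₁ * n.choose k₂ * s.descFactorial (k₁ + k₂)) • X (k₁ + k₂) =
      ∑ k ∈ range (m + n + 1), ((m + n).choose k * s.descFactorial k) • X k := by
  rw [sum_range_sum_range_sub (fun k₁ k₂ =>
    (m.choose k₁ * n.choose k₂ * s.descFactorial (k₁ + k₂)) • X (k₁ + k₂))]
  have hinner : ∀ k, ∑ ij ∈ antidiagonal k,
      (m.choose ij.1 * n.choose ij.2 * s.descFactorial (ij.1 + ij.2)) • X (ij.1 + ij.2) =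
      ((m + n).choose k * s.descFactorial k) • X k := by
    intro k
    rw [Nat.add_choose_eq, sum_mul, sum_smul]
    exact sum_congr rfl fun ij hij => by rw [mem_antidiagonal.1 hij]
  simp only [hinner]
  calc _ = ∑ k ∈ range (s + 1 + (m + n)), ((m + n).choose k * s.descFactorial k) • X k :=
        (eventually_constant_sum (fun k hk => by
          simp [Nat.descFactorial_of_lt (show s < k by omega)]) (by omega)).symm
    _ = _ := eventually_constant_sum (fun k hk => by
          simp [Nat.choose_eq_zero_of_lt (show m + n < k by omega)]) (by omega)

lemma exists_le_mul_of_mul_le_mul {u v : ℕ → ℝ} (hu : ∀ n, 0 ≤ u n) (hv : ∀ n, 0 < v n)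
    (n₀ : ℕ) (h : ∀ n, n₀ ≤ n → u (n + 1) * v n ≤ u n * v (n + 1)) :
    ∃ K, 0 ≤ K ∧ ∀ n, u n ≤ K * v n := by
  set w := fun n => u n / v n
  have hdecr : ∀ n, n₀ ≤ n → w n ≤ w n₀ := by
    intro n hn
    induction n, hn using Nat.le_induction with
    | base => exact le_rfl
    | succ n hn ih =>
      refine le_trans ?_ ih
      rw [div_le_div_iff₀ (hv _) (hv _)]
      exact h n hn
  set K := (range (n₀ + 1)).sup' nonempty_range_add_one w
  have hK : ∀ n, n ≤ n₀ → w n ≤ K := fun n hn => le_sup' w (mem_range.2 (by omega))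
  refine ⟨K, (div_nonneg (hu 0) (hv 0).le).trans (hK 0 (Nat.zero_le _)), fun n => ?_⟩
  rw [← div_le_iff₀ (hv n)]
  rcases le_total n n₀ with hn | hn
  · exact hK n hn
  · exact (hdecr n hn).trans (hK n₀ le_rfl)

lemma exists_one_lt_pow_mul_lt_one {δ : ℝ} (hδ : δ < 1) (k : ℕ) : ∃ σ, 1 < σ ∧ σ ^ k * δ < 1 := by
  have hlim : Filter.Tendsto (fun σ : ℝ => σ ^ k * δ) (nhdsWithin 1 (Set.Ioi 1)) (nhds δ) :=
    (((continuous_pow k).mul continuous_const).tendsto' 1 δ (by simp)).mono_left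
      nhdsWithin_le_nhds
  obtain ⟨σ, hσ, hσ1⟩ := ((hlim.eventually_lt_const hδ).and self_mem_nhdsWithin).exists
  exact ⟨σ, hσ1, hσ⟩

lemma choose_mul_pow_mul_pow_le_add_pow {a b : ℝ} (ha : 0 ≤ a) (hb : 0 ≤ b) (m n : ℕ) :
    (m + n).choose m * a ^ m * b ^ n ≤ (a + b) ^ (m + n) := by
  rw [add_pow]
  refine le_trans (le_of_eq ?_) (single_le_sum
    (f := fun i => a ^ i * b ^ (m + n - i) * ((m + n).choose i : ℝ))
    (fun i _ => by positivity) (mem_range.2 (by omega : m < m + n + 1)))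
  rw [Nat.add_sub_cancel_left]
  ring

/-- `appellF4 A B C C' x y` is by definition `∑' p, appellF4Term A B C C' x y p`. -/
noncomputable def appellF4Term (A B C C' : Mat) (x y : ℂ) (p : ℕ × ℕ) : Mat :=
  (((p.1 ! : ℂ) * (p.2 ! : ℂ))⁻¹ * x ^ p.1 * y ^ p.2) •
    (mPoch A (p.1 + p.2) * mPoch B (p.1 + p.2) * (mPoch C p.1)⁻¹ * (mPoch C' p.2)⁻¹)

section LinftyOpNorm

attribute [local instance] Matrix.linftyOpNormedAddCommGroup Matrix.linftyOpNormedRing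
  Matrix.linftyOpNormedAlgebra

lemma norm_one_le_one : ‖(1 : Mat)‖ ≤ 1 := by
  rw [← Matrix.diagonal_one, Matrix.linfty_opNorm_diagonal]
  exact (pi_norm_le_iff_of_nonneg zero_le_one).2 fun _ => by simp

lemma norm_add_natCast_smul_one_le (A : Mat) (n : ℕ) : ‖A + (n : ℂ) • 1‖ ≤ ‖A‖ + n := by
  calc ‖A + (n : ℂ) • 1‖ ≤ ‖A‖ + ‖(n : ℂ)‖ * ‖(1 : Mat)‖ := by
        grw [norm_add_le, norm_smul_le]
    _ ≤ ‖A‖ + n := by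
        rw [Complex.norm_natCast]
        gcongr
        exact mul_le_of_le_one_right (Nat.cast_nonneg n) norm_one_le_one

lemma norm_inv_add_natCast_smul_one_le {C : Mat} {n : ℕ} (hU : IsUnit (C + (n : ℂ) • 1))
    (hn : ‖C‖ < n) : ‖(C + (n : ℂ) • 1)⁻¹‖ ≤ (n - ‖C‖)⁻¹ := by
  set U := (C + (n : ℂ) • 1)⁻¹
  have hinv : (C + (n : ℂ) • 1) * U = 1 :=
    Matrix.mul_nonsing_inv _ ((Matrix.isUnit_iff_isUnit_det _).1 hU)
  rw [add_mul, smul_mul_assoc, one_mul, ← eq_sub_iff_add_eq'] at hinv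
  have hbound : n * ‖U‖ ≤ 1 + ‖C‖ * ‖U‖ := by
    calc n * ‖U‖ = ‖(n : ℂ) • U‖ := by rw [norm_smul, Complex.norm_natCast]
      _ ≤ ‖(1 : Mat)‖ + ‖C * U‖ := hinv ▸ norm_sub_le _ _
      _ ≤ 1 + ‖C‖ * ‖U‖ := add_le_add norm_one_le_one (norm_mul_le _ _)
  rw [inv_eq_one_div, le_div_iff₀ (sub_pos.2 hn)]
  linarith

lemma exists_norm_mPoch_le (A : Mat) {ρ : ℝ} (hρ : 1 < ρ) :
    ∃ K, 0 ≤ K ∧ ∀ n, ‖mPoch A n‖ ≤ K * (n ! * ρ ^ n) := by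
  obtain ⟨n₀, hn₀⟩ := exists_nat_ge (‖A‖ / (ρ - 1))
  refine exists_le_mul_of_mul_le_mul (fun n => norm_nonneg _) (fun n => by positivity) n₀
    fun n hn => ?_
  have hstep : ‖mPoch A (n + 1)‖ ≤ ‖mPoch A n‖ * (‖A‖ + n) :=
    (norm_mul_le _ _).trans (by gcongr; exact norm_add_natCast_smul_one_le A n)
  have hA : ‖A‖ + n ≤ (n + 1) * ρ := by
    have : ‖A‖ ≤ (ρ - 1) * n₀ := by rwa [div_le_iff₀' (by linarith)] at hn₀
    have : (n₀ : ℝ) ≤ n := by exact_mod_cast hn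
    nlinarith
  calc ‖mPoch A (n + 1)‖ * (n ! * ρ ^ n) ≤ ‖mPoch A n‖ * ((n + 1) * ρ) * (n ! * ρ ^ n) := by
        gcongr; exact hstep.trans (by gcongr)
    _ = ‖mPoch A n‖ * ((n + 1)! * ρ ^ (n + 1)) := by push_cast [Nat.factorial_succ]; ring

lemma exists_norm_inv_mPoch_le {C : Mat} (hC : ∀ n : ℕ, IsUnit (C + (n : ℂ) • 1)) {ρ : ℝ}
    (hρ : 1 < ρ) : ∃ K, 0 ≤ K ∧ ∀ n, ‖(mPoch C n)⁻¹‖ ≤ K * (ρ ^ n / n !) := by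
  obtain ⟨n₀, hn₀⟩ := exists_nat_ge ((1 + ρ * ‖C‖) / (ρ - 1))
  refine exists_le_mul_of_mul_le_mul (fun n => norm_nonneg _) (fun n => by positivity) n₀
    fun n hn => ?_
  have hn' : 1 + ρ * ‖C‖ ≤ (ρ - 1) * n := by
    rw [div_le_iff₀' (by linarith)] at hn₀
    exact hn₀.trans (by gcongr)
  have hCn : ‖C‖ < n := by nlinarith [norm_nonneg C]
  have hratio : (n - ‖C‖)⁻¹ ≤ ρ / (n + 1) := by
    rw [inv_eq_one_div, div_le_div_iff₀ (by linarith) (by positivity)]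
    linarith
  have hstep : ‖(mPoch C (n + 1))⁻¹‖ ≤ ρ / (n + 1) * ‖(mPoch C n)⁻¹‖ := by
    rw [mPoch, Matrix.mul_inv_rev]
    exact (norm_mul_le _ _).trans
      (by gcongr; exact (norm_inv_add_natCast_smul_one_le (hC n) hCn).trans hratio)
  calc ‖(mPoch C (n + 1))⁻¹‖ * (ρ ^ n / n !) ≤ ρ / (n + 1) * ‖(mPoch C n)⁻¹‖ * (ρ ^ n / n !) := by
        gcongr
    _ = ‖(mPoch C n)⁻¹‖ * (ρ ^ (n + 1) / (n + 1)!) := by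
        push_cast [Nat.factorial_succ]
        field_simp
        ring

lemma norm_appellF4Term_le (A B C C' : Mat) (x y : ℂ) (m n : ℕ) :
    ‖appellF4Term A B C C' x y (m, n)‖ ≤ (m ! * n ! : ℝ)⁻¹ * ‖x‖ ^ m * ‖y‖ ^ n *
      (‖mPoch A (m + n)‖ * ‖mPoch B (m + n)‖ * ‖(mPoch C m)⁻¹‖ * ‖(mPoch C' n)⁻¹‖) := by
  refine (norm_smul_le _ _).trans ?_
  simp only [norm_mul, norm_inv, norm_pow, Complex.norm_natCast]
  gcongr
  refine (norm_mul_le _ _).trans ?_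
  gcongr
  refine (norm_mul_le _ _).trans ?_
  gcongr
  exact norm_mul_le _ _

lemma exists_norm_appellF4Term_le (A B C C' : Mat) (x y : ℂ)
    (hC : ∀ n : ℕ, IsUnit (C + (n : ℂ) • 1)) (hC' : ∀ n : ℕ, IsUnit (C' + (n : ℂ) • 1))
    (hxy : Real.sqrt ‖x‖ + Real.sqrt ‖y‖ < 1) :
    ∃ K q, 0 ≤ K ∧ 0 ≤ q ∧ q < 1 ∧ ∀ p, ‖appellF4Term A B C C' x y p‖ ≤ K * q ^ (p.1 + p.2) := by
  set a := Real.sqrt ‖x‖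
  set b := Real.sqrt ‖y‖
  obtain ⟨σ, hσ, hσab⟩ := exists_one_lt_pow_mul_lt_one hxy 3
  have hρ : 1 < σ ^ 2 := one_lt_pow₀ hσ two_ne_zero
  obtain ⟨KA, hKA, hA⟩ := exists_norm_mPoch_le A hρ
  obtain ⟨KB, hKB, hB⟩ := exists_norm_mPoch_le B hρ
  obtain ⟨KC, hKC, hCinv⟩ := exists_norm_inv_mPoch_le hC hρ
  obtain ⟨KD, hKD, hC'inv⟩ := exists_norm_inv_mPoch_le hC' hρ
  have hab : 0 ≤ σ ^ 3 * (a + b) := by positivity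
  refine ⟨KA * KB * KC * KD, (σ ^ 3 * (a + b)) ^ 2, by positivity, by positivity,
    pow_lt_one₀ hab hσab two_ne_zero, fun ⟨m, n⟩ => ?_⟩
  have hx : ‖x‖ = a ^ 2 := (Real.sq_sqrt (norm_nonneg x)).symm
  have hy : ‖y‖ = b ^ 2 := (Real.sq_sqrt (norm_nonneg y)).symm
  have hfact : ((m + n)! : ℝ) = (m + n).choose m * m ! * n ! := by
    have := Nat.choose_mul_factorial_mul_factorial (Nat.le_add_right m n)
    rw [Nat.add_sub_cancel_left] at this
    exact_mod_cast this.symm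
  calc ‖appellF4Term A B C C' x y (m, n)‖
      ≤ (m ! * n ! : ℝ)⁻¹ * ‖x‖ ^ m * ‖y‖ ^ n * (KA * ((m + n)! * (σ ^ 2) ^ (m + n)) *
          (KB * ((m + n)! * (σ ^ 2) ^ (m + n))) * (KC * ((σ ^ 2) ^ m / m !)) *
          (KD * ((σ ^ 2) ^ n / n !))) := by
        grw [norm_appellF4Term_le]
        gcongr
        exacts [hA _, hB _, hCinv _, hC'inv _]
    _ = KA * KB * KC * KD * ((m + n).choose m * (σ ^ 3 * a) ^ m * (σ ^ 3 * b) ^ n) ^ 2 := by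
        rw [hx, hy, hfact]
        field_simp
        ring
    _ ≤ KA * KB * KC * KD * ((σ ^ 3 * a + σ ^ 3 * b) ^ (m + n)) ^ 2 := by
        gcongr
        exact choose_mul_pow_mul_pow_le_add_pow (by positivity) (by positivity) m n
    _ = KA * KB * KC * KD * ((σ ^ 3 * (a + b)) ^ 2) ^ (m + n) := by
        rw [← mul_add, ← pow_mul, ← pow_mul, mul_comm 2]

theorem summable_appellF4Term (A B C C' : Mat) (x y : ℂ)
    (hC : ∀ n : ℕ, IsUnit (C + (n : ℂ) • 1)) (hC' : ∀ n : ℕ, IsUnit (C' + (n : ℂ) • 1))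
    (hxy : Real.sqrt ‖x‖ + Real.sqrt ‖y‖ < 1) :
    Summable (appellF4Term A B C C' x y) := by
  obtain ⟨K, q, hK, hq0, hq1, hbound⟩ := exists_norm_appellF4Term_le A B C C' x y hC hC' hxy
  have hgeo := summable_geometric_of_lt_one hq0 hq1
  refine Summable.of_norm_bounded ?_ hbound
  simpa only [pow_add, mul_assoc] using
    (hgeo.mul_left K).mul_of_nonneg hgeo (fun _ => by positivity) (fun _ => by positivity)

end LinftyOpNorm

lemma mPoch_mul_shifted_mul_inv {B C C' D : Mat} (hBD : Commute B D) (hCC' : Commute C C')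
    (k₁ k₂ m n N : ℕ) :
    mPoch B (k₁ + k₂) * (mPoch D N * mPoch (B + ((k₁ + k₂ : ℕ) : ℂ) • 1) N *
        (mPoch (C + (k₁ : ℂ) • 1) m)⁻¹ * (mPoch (C' + (k₂ : ℂ) • 1) n)⁻¹) *
        (mPoch C k₁)⁻¹ * (mPoch C' k₂)⁻¹ =
      mPoch D N * mPoch B (k₁ + k₂ + N) * (mPoch C (k₁ + m))⁻¹ * (mPoch C' (k₂ + n))⁻¹ := by
  have hBD' := hBD.mPoch_mPoch (k₁ + k₂) N
  have hCC'' := (hCC'.add_smul_one_right (k₂ : ℂ)).inv_mPoch_inv_mPoch k₁ n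
  rw [mPoch_add B (k₁ + k₂) N, mPoch_inv_add C k₁ m, mPoch_inv_add C' k₂ n]
  simp only [mul_assoc]
  rw [hBD'.left_comm, hCC''.symm.left_comm]

lemma multinomial_mul_coeff_eq_shifted_coeff {𝕜 : Type*} [Field 𝕜] [CharZero 𝕜] (x y ε : 𝕜)
    {s k₁ k₂ : ℕ} (hk : k₁ + k₂ ≤ s) (m n : ℕ) :
    (s ! / (k₁ ! * k₂ ! * (s - k₁ - k₂)!) * (ε * x) ^ k₁ * (ε * y) ^ k₂) *
        ((m ! * n ! : 𝕜)⁻¹ * x ^ m * y ^ n) =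
      ((m + k₁)! * (n + k₂)! : 𝕜)⁻¹ * x ^ (m + k₁) * y ^ (n + k₂) * ε ^ (k₁ + k₂) *
        ((m + k₁).choose k₁ * (n + k₂).choose k₂ * s.descFactorial (k₁ + k₂) : ℕ) := by
  have hs : (s ! : 𝕜) = (s - k₁ - k₂)! * s.descFactorial (k₁ + k₂) := by
    rw [Nat.sub_sub]; exact_mod_cast (Nat.factorial_mul_descFactorial hk).symm
  have hm : ((m + k₁)! : 𝕜) = (m + k₁).choose k₁ * k₁ ! * m ! := by
    have := Nat.choose_mul_factorial_mul_factorial (Nat.le_add_left k₁ m)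
    rw [Nat.add_sub_cancel] at this
    exact_mod_cast this.symm
  have hn : ((n + k₂)! : 𝕜) = (n + k₂).choose k₂ * k₂ ! * n ! := by
    have := Nat.choose_mul_factorial_mul_factorial (Nat.le_add_left k₂ n)
    rw [Nat.add_sub_cancel] at this
    exact_mod_cast this.symm
  have hcm : ((m + k₁).choose k₁ : 𝕜) ≠ 0 := by
    exact_mod_cast (Nat.choose_pos (Nat.le_add_left k₁ m)).ne'
  have hcn : ((n + k₂).choose k₂ : 𝕜) ≠ 0 := by
    exact_mod_cast (Nat.choose_pos (Nat.le_add_left k₂ n)).ne'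
  have hsk : ((s - k₁ - k₂)! : 𝕜) ≠ 0 := Nat.cast_ne_zero.2 (Nat.factorial_ne_zero _)
  rw [hs, hm, hn]
  push_cast
  field_simp
  ring

/-- The contribution of the index pair `(k₁, k₂)` to `appellF4Term E B C C' x y` once `(E)_P` is
expanded as `∑ₖ C(P, k) s^{(k)} εᵏ (D)_{P-k}` and `C(M + N, k)` is split by Vandermonde's
identity. -/
noncomputable def appellF4Part (D B C C' : Mat) (x y ε : ℂ) (s k₁ k₂ : ℕ) (p : ℕ × ℕ) : Mat :=
  (((p.1 ! : ℂ) * p.2 !)⁻¹ * x ^ p.1 * y ^ p.2 * ε ^ (k₁ + k₂) *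
      (p.1.choose k₁ * p.2.choose k₂ * s.descFactorial (k₁ + k₂) : ℕ)) •
    (mPoch D (p.1 + p.2 - (k₁ + k₂)) * mPoch B (p.1 + p.2) * (mPoch C p.1)⁻¹ * (mPoch C' p.2)⁻¹)

lemma appellF4Term_eq_sum_appellF4Part {E B C C' : Mat} {D : ℕ → Mat} {ε : ℂ} {s : ℕ}
    (hE : ∀ P, mPoch E P =
      ∑ k ∈ range (P + 1), (P.choose k * s.descFactorial k) • (ε ^ k • mPoch (D k) (P - k)))
    (x y : ℂ) (p : ℕ × ℕ) :
    appellF4Term E B C C' x y p =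
      ∑ k₁ ∈ range (s + 1), ∑ k₂ ∈ range (s + 1 - k₁),
        appellF4Part (D (k₁ + k₂)) B C C' x y ε s k₁ k₂ p := by
  obtain ⟨m, n⟩ := p
  set X : ℕ → Mat := fun k =>
    ε ^ k • (mPoch (D k) (m + n - k) * mPoch B (m + n) * (mPoch C m)⁻¹ * (mPoch C' n)⁻¹)
  have hpart : ∀ k₁ k₂, appellF4Part (D (k₁ + k₂)) B C C' x y ε s k₁ k₂ (m, n) =
      (((m ! : ℂ) * n !)⁻¹ * x ^ m * y ^ n) •
        ((m.choose k₁ * n.choose k₂ * s.descFactorial (k₁ + k₂)) • X (k₁ + k₂)) := by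
    intro k₁ k₂
    simp only [appellF4Part, X, ← Nat.cast_smul_eq_nsmul ℂ, smul_smul]
    congr 1
    ring
  simp only [hpart, ← smul_sum]
  rw [sum_choose_mul_choose_mul_descFactorial]
  simp only [appellF4Term, hE, sum_mul, smul_mul_assoc, X]

lemma hasSum_appellF4Part {D B C C' : Mat} (hBD : Commute B D) (hCC' : Commute C C')
    (hC : ∀ n : ℕ, IsUnit (C + (n : ℂ) • 1)) (hC' : ∀ n : ℕ, IsUnit (C' + (n : ℂ) • 1))
    {x y : ℂ} (hxy : Real.sqrt ‖x‖ + Real.sqrt ‖y‖ < 1) (ε : ℂ) {s k₁ k₂ : ℕ}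
    (hk : k₁ + k₂ ≤ s) :
    HasSum (appellF4Part D B C C' x y ε s k₁ k₂)
      ((s ! / (k₁ ! * k₂ ! * (s - k₁ - k₂)!) * (ε * x) ^ k₁ * (ε * y) ^ k₂ : ℂ) •
        (mPoch B (k₁ + k₂) * appellF4 D (B + ((k₁ + k₂ : ℕ) : ℂ) • 1) (C + (k₁ : ℂ) • 1)
          (C' + (k₂ : ℂ) • 1) x y * (mPoch C k₁)⁻¹ * (mPoch C' k₂)⁻¹)) := by
  set shift : ℕ × ℕ → ℕ × ℕ := fun p => (p.1 + k₁, p.2 + k₂)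
  have hinj : Function.Injective shift := fun p q h => by
    simp only [shift, Prod.mk.injEq] at h
    exact Prod.ext (by omega) (by omega)
  have hzero : ∀ p ∉ Set.range shift, appellF4Part D B C C' x y ε s k₁ k₂ p = 0 := by
    rintro ⟨M, N⟩ hp
    have : M < k₁ ∨ N < k₂ := by
      by_contra! h
      exact hp ⟨(M - k₁, N - k₂), by simp only [shift, Prod.mk.injEq]; omega⟩
    rcases this with h | h <;> simp [appellF4Part, Nat.choose_eq_zero_of_lt h]
  have hCk : ∀ n : ℕ, IsUnit (C + (k₁ : ℂ) • 1 + (n : ℂ) • 1) := fun n => by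
    rw [add_smul_one_add_smul_one]; exact hC _
  have hC'k : ∀ n : ℕ, IsUnit (C' + (k₂ : ℂ) • 1 + (n : ℂ) • 1) := fun n => by
    rw [add_smul_one_add_smul_one]; exact hC' _
  have hshift : ∀ p, appellF4Part D B C C' x y ε s k₁ k₂ (shift p) =
      (s ! / (k₁ ! * k₂ ! * (s - k₁ - k₂)!) * (ε * x) ^ k₁ * (ε * y) ^ k₂ : ℂ) •
        (mPoch B (k₁ + k₂) * appellF4Term D (B + ((k₁ + k₂ : ℕ) : ℂ) • 1) (C + (k₁ : ℂ) • 1)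
          (C' + (k₂ : ℂ) • 1) x y p * (mPoch C k₁)⁻¹ * (mPoch C' k₂)⁻¹) := by
    rintro ⟨m, n⟩
    have hidx : m + k₁ + (n + k₂) = k₁ + k₂ + (m + n) := by omega
    simp only [appellF4Part, appellF4Term, shift, hidx, Nat.add_sub_cancel_left, mul_smul_comm,
      smul_mul_assoc, smul_smul, mPoch_mul_shifted_mul_inv hBD hCC',
      multinomial_mul_coeff_eq_shifted_coeff x y ε hk]
    rw [add_comm k₁ m, add_comm k₂ n]
  rw [← hinj.hasSum_iff hzero, Function.comp_def]
  simp only [hshift]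
  exact ((((summable_appellF4Term _ _ _ _ x y hCk hC'k hxy).hasSum.mul_left _).mul_right
    _).mul_right _).const_smul _

theorem appellF4_eq_sum_of_mPoch_eq_sum {E B C C' : Mat} {D : ℕ → Mat} {ε : ℂ} {s : ℕ}
    (hE : ∀ P, mPoch E P =
      ∑ k ∈ range (P + 1), (P.choose k * s.descFactorial k) • (ε ^ k • mPoch (D k) (P - k)))
    (hBD : ∀ k, Commute B (D k)) (hCC' : Commute C C')
    (hC : ∀ n : ℕ, IsUnit (C + (n : ℂ) • 1)) (hC' : ∀ n : ℕ, IsUnit (C' + (n : ℂ) • 1))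
    {x y : ℂ} (hxy : Real.sqrt ‖x‖ + Real.sqrt ‖y‖ < 1) :
    appellF4 E B C C' x y =
      ∑ k₁ ∈ range (s + 1), ∑ k₂ ∈ range (s + 1 - k₁),
        (s ! / (k₁ ! * k₂ ! * (s - k₁ - k₂)!) * (ε * x) ^ k₁ * (ε * y) ^ k₂ : ℂ) •
          (mPoch B (k₁ + k₂) * appellF4 (D (k₁ + k₂)) (B + ((k₁ + k₂ : ℕ) : ℂ) • 1)
            (C + (k₁ : ℂ) • 1) (C' + (k₂ : ℂ) • 1) x y * (mPoch C k₁)⁻¹ * (mPoch C' k₂)⁻¹) := by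
  have hsum := hasSum_sum (s := range (s + 1)) fun k₁ hk₁ =>
    hasSum_sum (s := range (s + 1 - k₁)) fun k₂ hk₂ =>
    hasSum_appellF4Part (hBD (k₁ + k₂)) hCC' hC hC' hxy ε
      (show k₁ + k₂ ≤ s by rw [mem_range] at hk₁ hk₂; omega)
  rw [← funext (appellF4Term_eq_sum_appellF4Part hE x y)] at hsum
  exact hsum.tsum_eq

theorem appellF4_recursion_A_multinom {r : ℕ} (A B C C' : Matrix (Fin r) (Fin r) ℂ) (x y : ℂ)
    (hC : ∀ n : ℕ, IsUnit (C + (n : ℂ) • (1 : Matrix (Fin r) (Fin r) ℂ)))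
    (hC' : ∀ n : ℕ, IsUnit (C' + (n : ℂ) • (1 : Matrix (Fin r) (Fin r) ℂ)))
    (hAB : A * B = B * A) (hCC' : C * C' = C' * C)
    (hxy : Real.sqrt ‖x‖ + Real.sqrt ‖y‖ < 1) :
    ((∀ k : ℕ, IsUnit (A + (k : ℂ) • (1 : Matrix (Fin r) (Fin r) ℂ))) →
      ∀ s : ℕ,
        appellF4 (A + (s : ℂ) • 1) B C C' x y =
          ∑ k₁ ∈ Finset.range (s + 1), ∑ k₂ ∈ Finset.range (s + 1 - k₁),
            (((s.factorial : ℂ) /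
                ((k₁.factorial : ℂ) * (k₂.factorial : ℂ) * ((s - k₁ - k₂).factorial : ℂ))) *
              x ^ k₁ * y ^ k₂) •
              (mPoch B (k₁ + k₂) *
                appellF4 (A + ((k₁ : ℂ) + (k₂ : ℂ)) • 1) (B + ((k₁ : ℂ) + (k₂ : ℂ)) • 1)
                  (C + (k₁ : ℂ) • 1) (C' + (k₂ : ℂ) • 1) x y *
                (mPoch C k₁)⁻¹ * (mPoch C' k₂)⁻¹)) ∧
    ((∀ k : ℕ, IsUnit (A + (k : ℂ) • (1 : Matrix (Fin r) (Fin r) ℂ))) →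
      ∀ s : ℕ,
        (∀ k : ℕ, 1 ≤ k → k ≤ s → IsUnit (A - (k : ℂ) • (1 : Matrix (Fin r) (Fin r) ℂ))) →
        appellF4 (A - (s : ℂ) • 1) B C C' x y =
          ∑ k₁ ∈ Finset.range (s + 1), ∑ k₂ ∈ Finset.range (s + 1 - k₁),
            (((s.factorial : ℂ) /
                ((k₁.factorial : ℂ) * (k₂.factorial : ℂ) * ((s - k₁ - k₂).factorial : ℂ))) *
              (-x) ^ k₁ * (-y) ^ k₂) •
              (mPoch B (k₁ + k₂) *
                appellF4 A (B + ((k₁ : ℂ) + (k₂ : ℂ)) • 1)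
                  (C + (k₁ : ℂ) • 1) (C' + (k₂ : ℂ) • 1) x y *
                (mPoch C k₁)⁻¹ * (mPoch C' k₂)⁻¹)) := by
  have hBA : Commute B A := hAB.symm
  refine ⟨fun _ s => ?_, fun _ s _ => ?_⟩
  · have hE : ∀ P, mPoch (A + (s : ℂ) • 1) P = ∑ k ∈ range (P + 1),
        (P.choose k * s.descFactorial k) • ((1 : ℂ) ^ k • mPoch (A + (k : ℂ) • 1) (P - k)) := by
      simpa only [one_pow, one_smul] using mPoch_add_smul_one_eq_sum s A
    simpa only [one_mul, Nat.cast_add] using appellF4_eq_sum_of_mPoch_eq_sum hE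
      (fun k => hBA.add_smul_one_right (k : ℂ)) hCC' hC hC' hxy
  · simpa only [neg_one_mul, Nat.cast_add] using appellF4_eq_sum_of_mPoch_eq_sum
      (mPoch_sub_smul_one_eq_sum s A) (fun _ => hBA) hCC' hC hC' hxy
end
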